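/- Let ℓ ≥ 0 be an integer, set ρ_j = ℓ/2 + 1 − j for j = 1,…,ℓ+1, and let s ∈ ℂ and x, y ∈ ℝ^{ℓ+1}. Then the Gaussian integral over the ℓ(ℓ+1)/2 variables n_{ij} (indexed by pairs 1 ≤ j < i ≤ ℓ+1) satisfies: 2^{ℓ+1} · exp( Σ_{1≤i<j≤ℓ+1}(y_i − y_j) + (is + ℓ/2)·Σ_{j=1}^{ℓ+1}(y_j − x_j) − π Σ_{j=1}^{ℓ+1} e^{2(y_j−x_j)} ) · ∫_{ℝ^{ℓ(ℓ+1)/2}} exp( 2πi Σ_{k=1}^{ℓ} n_{k+1,k} − π Σ_{1≤j<i≤ℓ+1} n_{ij}² e^{2(y_j − x_i)} ) Π dn_{ij} = 2^{ℓ+1} exp( Σ_{j=1}^{ℓ+1}(is + ρ_j)(y_j − x_j) − π Σ_{k=1}^{ℓ}( e^{2(y_k−x_k)} + e^{2(x_{k+1}−y_k)} ) − π e^{2(y_{ℓ+1}−x_{ℓ+1})} ). In particular the integral on the left converges absolutely. -/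

import Mathlib

/-!
The integrand is a product of one-variable Gaussians, one for each entry `n_{ij}`, whose
frequency is `1` on the subdiagonal `i = j + 1` and `0` elsewhere. By Fubini and the Fourier
transform of a Gaussian, the integral equals
`exp (∑_{j<i} (x_i - y_j) - π ∑_k e^{2(x_{k+1} - y_k)})`. Against the prefactor, the two double
sums `∑_{i<j} (y_i - y_j) + ∑_{j<i} (x_i - y_j)` collapse to `∑_i (i - 1) (x_i - y_i)`, which
turns `ℓ/2` into `ρ_i`.
-/

open MeasureTheory Finset

/-- Index set of the lower-triangular entries `n_{ij}`, `1 ≤ j < i ≤ ℓ+1`: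
pairs `(i,j)` with `j < i`. -/
abbrev LowerIdx (ℓ : ℕ) := {p : Fin (ℓ+1) × Fin (ℓ+1) // p.2 < p.1}

open Complex Real

lemma re_neg_pi_mul_exp_lt_zero (r : ℝ) : (-((π : ℂ) * (rexp r : ℂ))).re < 0 := by
  rw [← ofReal_mul, ← ofReal_neg, ofReal_re, neg_lt_zero]
  positivity

lemma integrable_cexp_neg_pi_exp_mul_sq_add_mul (r c : ℝ) :
    Integrable (fun t : ℝ => cexp (-((π : ℂ) * (rexp r : ℂ)) * (t : ℂ) ^ 2
      + 2 * π * I * c * t)) := by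
  simpa using integrable_cexp_quadratic' (re_neg_pi_mul_exp_lt_zero r) (2 * π * I * c) 0

lemma integral_cexp_neg_pi_exp_mul_sq_add_mul (r c : ℝ) :
    ∫ t : ℝ, cexp (-((π : ℂ) * (rexp r : ℂ)) * (t : ℂ) ^ 2 + 2 * π * I * c * t)
      = cexp (-(r : ℂ) / 2 - π * (c : ℂ) ^ 2 * (rexp (-r) : ℂ)) := by
  have hquad := integral_cexp_quadratic (re_neg_pi_mul_exp_lt_zero r) (2 * π * I * c) 0
  simp only [add_zero, zero_sub] at hquad
  have hscale :
      ((π : ℂ) / -(-((π : ℂ) * (rexp r : ℂ)))) ^ (1 / 2 : ℂ) = cexp (-(r : ℂ) / 2) := by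
    rw [neg_neg, div_mul_cancel_left₀ (ofReal_ne_zero.mpr pi_ne_zero), ← ofReal_inv,
      ← Real.exp_neg, show (1 / 2 : ℂ) = ((1 / 2 : ℝ) : ℂ) by norm_num,
      ← ofReal_cpow (Real.exp_nonneg _), ← Real.exp_mul, ofReal_exp]
    push_cast
    ring_nf
  rw [hquad, hscale, ← Complex.exp_add, ofReal_exp, ofReal_exp, ofReal_neg, Complex.exp_neg]
  congr 1
  field_simp
  rw [I_sq]
  ring

section GaussianProduct

variable {ι : Type*} [Fintype ι]

lemma integrable_cexp_sum_neg_pi_exp_mul_sq_add_mul (r c : ι → ℝ) :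
    Integrable (fun n : ι → ℝ => cexp (∑ i, (-((π : ℂ) * (rexp (r i) : ℂ)) * (n i : ℂ) ^ 2
      + 2 * π * I * c i * n i))) := by
  simp_rw [Complex.exp_sum]
  exact Integrable.fintype_prod fun i => integrable_cexp_neg_pi_exp_mul_sq_add_mul (r i) (c i)

lemma integral_cexp_sum_neg_pi_exp_mul_sq_add_mul (r c : ι → ℝ) :
    ∫ n : ι → ℝ, cexp (∑ i, (-((π : ℂ) * (rexp (r i) : ℂ)) * (n i : ℂ) ^ 2
      + 2 * π * I * c i * n i))
      = cexp (∑ i, (-(r i : ℂ) / 2 - π * (c i : ℂ) ^ 2 * (rexp (-r i) : ℂ))) := by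
  simp_rw [Complex.exp_sum]
  rw [integral_fintype_prod_volume_eq_prod
    (fun i (t : ℝ) => cexp (-((π : ℂ) * (rexp (r i) : ℂ)) * (t : ℂ) ^ 2 + 2 * π * I * c i * t))]
  exact prod_congr rfl fun i _ => integral_cexp_neg_pi_exp_mul_sq_add_mul (r i) (c i)

end GaussianProduct

lemma sum_subtype_snd_lt_eq_sum_sum_Iio {α M : Type*} [Fintype α] [Preorder α]
    [LocallyFiniteOrderBot α] [DecidableLT α] [AddCommMonoid M] (F : α → α → M) :
    ∑ p : {p : α × α // p.2 < p.1}, F p.1.1 p.1.2 = ∑ i, ∑ j ∈ Iio i, F i j := by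
  rw [← sum_subtype ({p | p.2 < p.1} : Finset (α × α)) (by simp) (fun p => F p.1 p.2),
    sum_filter, ← univ_product_univ, sum_product]
  simp_rw [← sum_filter, filter_gt_eq_Iio]

lemma sum_sum_Ioi_sub_add_sum_sum_Iio_sub {R : Type*} [CommRing R] {m : ℕ} (x y : Fin m → R) :
    ∑ i, ∑ j ∈ Ioi i, (y i - y j) + ∑ i, ∑ j ∈ Iio i, (x i - y j)
      = ∑ i : Fin m, ((i : ℕ) : R) * (x i - y i) := by
  rw [sum_comm' (t' := univ) (s' := fun j => Iio j) (by simp), ← sum_add_distrib]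
  refine sum_congr rfl fun i _ => ?_
  simp_rw [← sum_add_distrib, sub_add_sub_cancel', sum_const, Fin.card_Iio, nsmul_eq_mul]

def subdiag (ℓ : ℕ) : Fin ℓ ↪ LowerIdx ℓ where
  toFun k := ⟨(k.succ, k.castSucc), Fin.castSucc_lt_succ⟩
  inj' _ _ h := Fin.castSucc_injective _ (congrArg (fun p : LowerIdx ℓ => p.1.2) h)

@[simp]
lemma subdiag_apply {ℓ : ℕ} (k : Fin ℓ) :
    subdiag ℓ k = ⟨(k.succ, k.castSucc), Fin.castSucc_lt_succ⟩ := rfl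

def subdiagIndicator (ℓ : ℕ) (p : LowerIdx ℓ) : ℝ := if p ∈ univ.map (subdiag ℓ) then 1 else 0

lemma sum_subdiagIndicator_mul {ℓ : ℕ} (g : LowerIdx ℓ → ℂ) :
    ∑ p, (subdiagIndicator ℓ p : ℂ) * g p = ∑ k, g (subdiag ℓ k) := by
  simp_rw [subdiagIndicator, apply_ite ((↑) : ℝ → ℂ), ofReal_one, ofReal_zero, ite_mul, one_mul,
    zero_mul, Fintype.sum_extend_by_zero, sum_map]

lemma subdiagIndicator_sq {ℓ : ℕ} (p : LowerIdx ℓ) :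
    subdiagIndicator ℓ p ^ 2 = subdiagIndicator ℓ p := by
  unfold subdiagIndicator
  split_ifs <;> norm_num

lemma baxter_integrand_exponent_eq (ℓ : ℕ) (x y : Fin (ℓ+1) → ℝ) (n : LowerIdx ℓ → ℝ) :
    2 * π * I * (∑ k, (n (subdiag ℓ k) : ℂ))
        - π * ∑ p : LowerIdx ℓ, (n p : ℂ) ^ 2 * rexp (2 * (y p.1.2 - x p.1.1))
      = ∑ p, (-((π : ℂ) * (rexp (2 * (y p.1.2 - x p.1.1)) : ℂ)) * (n p : ℂ) ^ 2
          + 2 * π * I * subdiagIndicator ℓ p * n p) := by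
  rw [sum_add_distrib, ← sum_subdiagIndicator_mul fun p => (n p : ℂ), mul_sum, mul_sum,
    sub_eq_neg_add, ← sum_neg_distrib]
  congr 1 <;> exact sum_congr rfl fun p _ => by ring

lemma baxter_gaussian_exponent_eq (ℓ : ℕ) (x y : Fin (ℓ+1) → ℝ) :
    ∑ p : LowerIdx ℓ, (-((2 * (y p.1.2 - x p.1.1) : ℝ) : ℂ) / 2
        - π * (subdiagIndicator ℓ p : ℂ) ^ 2 * (rexp (-(2 * (y p.1.2 - x p.1.1))) : ℂ))
      = ∑ i, ∑ j ∈ Iio i, ((x i : ℂ) - y j)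
          - π * ∑ k : Fin ℓ, (rexp (2 * (x k.succ - y k.castSucc)) : ℂ) := by
  rw [sum_sub_distrib, ← sum_subtype_snd_lt_eq_sum_sum_Iio fun i j => (x i : ℂ) - y j, mul_sum]
  congr 1
  · exact sum_congr rfl fun p _ => by push_cast; ring
  · simp_rw [← ofReal_pow, subdiagIndicator_sq]
    calc _ = ∑ p, (subdiagIndicator ℓ p : ℂ) * (π * rexp (-(2 * (y p.1.2 - x p.1.1)))) :=
          sum_congr rfl fun p _ => by ring
      _ = _ := by
          rw [sum_subdiagIndicator_mul]
          exact sum_congr rfl fun k _ => by simp only [subdiag_apply]; ring_nf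

theorem baxter_kernel_gaussian_integral (ℓ : ℕ) (s : ℂ) (x y : Fin (ℓ+1) → ℝ) :
    Integrable (fun n : LowerIdx ℓ → ℝ =>
      Complex.exp (2 * Real.pi * Complex.I *
          (∑ k : Fin ℓ, (n ⟨(k.succ, k.castSucc), (Fin.castSucc_lt_succ : k.castSucc < k.succ)⟩ : ℂ))
        - (Real.pi : ℂ) * ∑ p : LowerIdx ℓ,
            (n p : ℂ)^2 * Real.exp (2 * (y p.1.2 - x p.1.1)))) ∧
    (2 : ℂ) ^ (ℓ+1) *
      Complex.exp ((∑ i : Fin (ℓ+1), ∑ j ∈ Ioi i, ((y i - y j : ℝ) : ℂ))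
        + (Complex.I * s + (ℓ : ℂ)/2) * (∑ j : Fin (ℓ+1), ((y j - x j : ℝ) : ℂ))
        - (Real.pi : ℂ) * ∑ j : Fin (ℓ+1), (Real.exp (2 * (y j - x j)) : ℂ)) *
      (∫ n : LowerIdx ℓ → ℝ,
        Complex.exp (2 * Real.pi * Complex.I *
            (∑ k : Fin ℓ, (n ⟨(k.succ, k.castSucc), (Fin.castSucc_lt_succ : k.castSucc < k.succ)⟩ : ℂ))
          - (Real.pi : ℂ) * ∑ p : LowerIdx ℓ,
              (n p : ℂ)^2 * Real.exp (2 * (y p.1.2 - x p.1.1))))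
    = (2 : ℂ) ^ (ℓ+1) *
      Complex.exp ((∑ j : Fin (ℓ+1),
          (Complex.I * s + ((ℓ : ℂ)/2 + 1 - ((j : ℕ) + 1))) * ((y j - x j : ℝ) : ℂ))
        - (Real.pi : ℂ) * ∑ k : Fin ℓ,
            ((Real.exp (2 * (y k.castSucc - x k.castSucc)) : ℂ)
              + (Real.exp (2 * (x k.succ - y k.castSucc)) : ℂ))
        - (Real.pi : ℂ) * (Real.exp (2 * (y (Fin.last ℓ) - x (Fin.last ℓ))) : ℂ)) := by
  have hintegrand := funext fun n => congrArg cexp (baxter_integrand_exponent_eq ℓ x y n)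
  simp only [subdiag_apply] at hintegrand
  rw [hintegrand]
  refine ⟨integrable_cexp_sum_neg_pi_exp_mul_sq_add_mul _ _, ?_⟩
  rw [integral_cexp_sum_neg_pi_exp_mul_sq_add_mul, baxter_gaussian_exponent_eq, mul_assoc,
    ← Complex.exp_add]
  congr 2
  have hweights := sum_sum_Ioi_sub_add_sum_sum_Iio_sub (fun i => (x i : ℂ)) (fun i => (y i : ℂ))
  have hlinear : (I * s + (ℓ : ℂ) / 2) * ∑ j : Fin (ℓ+1), ((y j : ℂ) - x j)
      + ∑ j : Fin (ℓ+1), ((j : ℕ) : ℂ) * ((x j : ℂ) - y j)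
      = ∑ j : Fin (ℓ+1), (I * s + ((ℓ : ℂ) / 2 + 1 - ((j : ℕ) + 1))) * ((y j : ℂ) - x j) := by
    rw [mul_sum, ← sum_add_distrib]
    exact sum_congr rfl fun j _ => by ring
  simp only [ofReal_sub]
  rw [Fin.sum_univ_castSucc fun j => (rexp (2 * (y j - x j)) : ℂ), sum_add_distrib]
  linear_combination hweights + hlinear
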